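/- Let φ be the structure function of a semicoherent system on n components with structural signature (s₁,…,s_n). Then for every k = 1,…,n, s_k = ∑_{j=1}^{k} (C(k−1, j−1)/C(n, j)) · d^D_j, where C(·,·) denotes binomial coefficients and the identity is an equality of rational numbers. -/

import Mathlib

/-!
Write `T_ψ(m) = ∑_{|A| = m} ψ(A)`. The signature is a difference of the normalized layer sums
`T_φ(m) / C(n, m)` at `m = n - k + 1` and `m = n - k`; complementation turns `T_φ(n - m)` into
`C(n, m) - T_{φᴰ}(m)`. Möbius inversion `ψ(A) = ∑_{B ⊆ A} d(B)` and counting the `m`-sets above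
a `j`-set give `T_ψ(m) = ∑_j C(n - j, m - j) d_j`, that is
`T_ψ(m) / C(n, m) = ∑_j C(m, j) / C(n, j) · d_j`, and Pascal's rule
`C(k, j) - C(k - 1, j) = C(k - 1, j - 1)` finishes.
-/

open Finset

/-- The coefficients of the simple (multilinear) form of a structure function:
`d(A) = ∑_{B ⊆ A} (−1)^{|A|−|B|} φ(B)`. -/
def dCoef {n : ℕ} (φ : Finset (Fin n) → ℚ) (A : Finset (Fin n)) : ℚ :=
  ∑ B ∈ A.powerset, (-1 : ℚ) ^ (A.card - B.card) * φ B

/-- The dual structure function `φᴰ(A) = 1 − φ([n]∖A)`. -/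
def dualFun {n : ℕ} (φ : Finset (Fin n) → ℚ) (A : Finset (Fin n)) : ℚ :=
  1 - φ Aᶜ

/-- `d_k = ∑_{A ⊆ [n], |A| = k} d(A)`. -/
def dk {n : ℕ} (φ : Finset (Fin n) → ℚ) (k : ℕ) : ℚ :=
  ∑ A ∈ (Finset.univ : Finset (Fin n)).powerset.filter (fun A => A.card = k), dCoef φ A

/-- The structural signature: `s_k = ∑_{|A| = n−k+1} φ(A)/C(n,|A|) − ∑_{|A| = n−k} φ(A)/C(n,|A|)`. -/
def sig {n : ℕ} (φ : Finset (Fin n) → ℚ) (k : ℕ) : ℚ :=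
  (∑ A ∈ (Finset.univ : Finset (Fin n)).powerset.filter (fun A => A.card = n - k + 1),
      φ A / (n.choose A.card : ℚ))
  - ∑ A ∈ (Finset.univ : Finset (Fin n)).powerset.filter (fun A => A.card = n - k),
      φ A / (n.choose A.card : ℚ)

section Alternating

variable {α R : Type*} [DecidableEq α] [Ring R]

theorem sum_Icc_neg_one_pow_card_sub {C A : Finset α} (hCA : C ⊆ A) :
    ∑ B ∈ Icc C A, (-1 : R) ^ (#B - #C) = if C = A then 1 else 0 := by
  have hdisj : ∀ D ∈ (A \ C).powerset, Disjoint C D := fun D hD =>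
    disjoint_of_subset_right (mem_powerset.1 hD) disjoint_sdiff
  rw [Icc_eq_image_powerset hCA, sum_image fun D hD D' hD' h => by
    rw [← union_sdiff_cancel_left (hdisj D hD), ← union_sdiff_cancel_left (hdisj D' hD'),
      Set.mem_ofPred_eq.mp h]]
  calc ∑ D ∈ (A \ C).powerset, (-1 : R) ^ (#(C ∪ D) - #C)
      = ∑ D ∈ (A \ C).powerset, (-1 : R) ^ #D := sum_congr rfl fun D hD => by
        rw [card_union_of_disjoint (hdisj D hD), Nat.add_sub_cancel_left]
    _ = if A \ C = ∅ then 1 else 0 := by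
        simpa using congrArg (Int.cast : ℤ → R) (sum_powerset_neg_one_pow_card (x := A \ C))
    _ = if C = A then 1 else 0 :=
        if_congr (sdiff_eq_empty_iff_subset.trans ⟨subset_antisymm hCA, fun h => h ▸ subset_rfl⟩)
          rfl rfl

end Alternating

section Layers

variable {α M : Type*} [Fintype α] [DecidableEq α] [AddCommMonoid M]

theorem card_supersets_of_card {B : Finset α} {m : ℕ} (hB : #B ≤ m) :
    #{A ∈ (univ : Finset α).powerset | #A = m ∧ B ⊆ A}
      = (Fintype.card α - #B).choose (m - #B) := by
  rw [← card_compl, ← card_powersetCard]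
  refine card_bij' (fun A _ => A \ B) (fun D _ => B ∪ D) (fun A hA => ?_) (fun D hD => ?_)
    (fun A hA => ?_) (fun D hD => ?_)
  all_goals simp only [mem_filter, mem_powerset, mem_powersetCard,
    subset_compl_iff_disjoint_right, subset_univ, true_and] at *
  · exact ⟨sdiff_disjoint, by rw [card_sdiff_of_subset hA.2, hA.1]⟩
  · exact ⟨by rw [card_union_of_disjoint hD.1.symm, hD.2]; omega, subset_union_left⟩
  · exact union_sdiff_of_subset hA.2
  · exact union_sdiff_cancel_left hD.1.symm

theorem sum_layer_sum_powersetCard (f : Finset α → M) {j m : ℕ} (hjm : j ≤ m) :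
    ∑ A ∈ (univ : Finset α).powerset with #A = m, ∑ B ∈ A.powersetCard j, f B
      = (Fintype.card α - j).choose (m - j) •
          ∑ B ∈ (univ : Finset α).powerset with #B = j, f B := by
  rw [sum_comm' (t' := {B ∈ (univ : Finset α).powerset | #B = j})
    (s' := fun B => {A ∈ (univ : Finset α).powerset | #A = m ∧ B ⊆ A}) fun A B => by
      simp only [mem_filter, mem_powerset, mem_powersetCard, subset_univ, true_and]
      tauto, smul_sum]
  refine sum_congr rfl fun B hB => ?_
  have hB : #B = j := (mem_filter.1 hB).2
  rw [sum_const, card_supersets_of_card (hB ▸ hjm), hB]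

end Layers

theorem sum_range_choose_mul_sub_sum_range_choose_mul {R : Type*} [Ring R] (f : ℕ → R) {k : ℕ}
    (hk : 1 ≤ k) :
    ∑ j ∈ range (k + 1), (k.choose j : R) * f j - ∑ j ∈ range k, ((k - 1).choose j : R) * f j
      = ∑ j ∈ Icc 1 k, ((k - 1).choose (j - 1) : R) * f j := by
  obtain ⟨a, rfl⟩ : ∃ a, k = a + 1 := ⟨k - 1, by omega⟩
  have hfirst : ∑ j ∈ range (a + 2), ((a + 1).choose j : R) * f j
      = ∑ j ∈ range (a + 1), (a.choose j : R) * f (j + 1)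
        + ∑ j ∈ range (a + 1), (a.choose (j + 1) : R) * f (j + 1) + f 0 := by
    simp only [sum_range_succ' _ (a + 1), Nat.choose_succ_succ', Nat.cast_add, add_mul,
      sum_add_distrib, Nat.choose_zero_right, Nat.cast_one, one_mul]
  have hsecond : ∑ j ∈ range (a + 1), (a.choose j : R) * f j
      = ∑ j ∈ range (a + 1), (a.choose (j + 1) : R) * f (j + 1) + f 0 := by
    rw [sum_range_succ', sum_range_succ (fun j => (a.choose (j + 1) : R) * f (j + 1)) a,
      Nat.choose_succ_self, Nat.choose_zero_right, Nat.cast_zero, zero_mul, add_zero, Nat.cast_one,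
      one_mul]
  have hshift : ∑ j ∈ range (a + 1), (a.choose j : R) * f (j + 1)
      = ∑ j ∈ Icc 1 (a + 1), (a.choose (j - 1) : R) * f j := by
    rw [range_eq_Ico, ← Ico_add_one_right_eq_Icc]
    exact sum_Ico_add' (fun j => (a.choose (j - 1) : R) * f j) 0 (a + 1) 1
  rw [Nat.add_sub_cancel, hfirst, hsecond, hshift]
  abel

section LayerSums

variable {n : ℕ}

theorem sum_powerset_dCoef (ψ : Finset (Fin n) → ℚ) (A : Finset (Fin n)) :
    ∑ B ∈ A.powerset, dCoef ψ B = ψ A := by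
  simp only [dCoef]
  rw [sum_comm' (t' := A.powerset) (s' := fun C => Icc C A) fun B C => by
    simp only [mem_powerset, mem_Icc]
    exact ⟨fun h => ⟨⟨h.2, h.1⟩, h.2.trans h.1⟩, fun h => ⟨h.1.2, h.1.1⟩⟩]
  calc ∑ C ∈ A.powerset, ∑ B ∈ Icc C A, (-1 : ℚ) ^ (#B - #C) * ψ C
      = ∑ C ∈ A.powerset, (if C = A then 1 else 0) * ψ C := sum_congr rfl fun C hC => by
        rw [← sum_mul, sum_Icc_neg_one_pow_card_sub (mem_powerset.1 hC)]
    _ = ψ A := by simp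

def layerSum (ψ : Finset (Fin n) → ℚ) (m : ℕ) : ℚ :=
  ∑ A ∈ (univ : Finset (Fin n)).powerset with #A = m, ψ A

theorem layerSum_eq_sum_dk (ψ : Finset (Fin n) → ℚ) (m : ℕ) :
    layerSum ψ m = ∑ j ∈ range (m + 1), ((n - j).choose (m - j) : ℚ) * dk ψ j := by
  calc layerSum ψ m
      = ∑ A ∈ (univ : Finset (Fin n)).powerset with #A = m, ∑ B ∈ A.powerset, dCoef ψ B := by
        simp only [layerSum, sum_powerset_dCoef]
    _ = ∑ A ∈ (univ : Finset (Fin n)).powerset with #A = m,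
          ∑ j ∈ range (m + 1), ∑ B ∈ A.powersetCard j, dCoef ψ B :=
        sum_congr rfl fun A hA => by rw [sum_powerset, (mem_filter.1 hA).2]
    _ = ∑ j ∈ range (m + 1), ((n - j).choose (m - j) : ℚ) * dk ψ j := by
        rw [sum_comm]
        refine sum_congr rfl fun j hj => ?_
        rw [sum_layer_sum_powersetCard _ (Nat.lt_succ_iff.1 (mem_range.1 hj)), Fintype.card_fin,
          nsmul_eq_mul, dk]

theorem layerSum_dualFun (φ : Finset (Fin n) → ℚ) {m : ℕ} (hm : m ≤ n) :
    layerSum (dualFun φ) m = n.choose m - layerSum φ (n - m) := by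
  rw [layerSum, layerSum]
  simp only [dualFun, sum_sub_distrib, sum_const, ← powersetCard_eq_filter, card_powersetCard,
    card_univ, Fintype.card_fin, nsmul_one]
  congr 1
  refine sum_nbij' compl compl (fun A hA => ?_) (fun A hA => ?_) (fun A _ => compl_compl A)
    (fun A _ => compl_compl A) fun A _ => rfl
  all_goals simp only [mem_powersetCard, subset_univ, true_and, card_compl, Fintype.card_fin] at *
  all_goals omega

def layerMean (ψ : Finset (Fin n) → ℚ) (m : ℕ) : ℚ :=
  layerSum ψ m / n.choose m

theorem layerMean_eq_sum_div (ψ : Finset (Fin n) → ℚ) (m : ℕ) :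
    layerMean ψ m = ∑ A ∈ (univ : Finset (Fin n)).powerset with #A = m, ψ A / n.choose #A := by
  rw [layerMean, layerSum, sum_div]
  exact sum_congr rfl fun A hA => by rw [(mem_filter.1 hA).2]

theorem sig_eq_layerMean_sub (φ : Finset (Fin n) → ℚ) (k : ℕ) :
    sig φ k = layerMean φ (n - k + 1) - layerMean φ (n - k) := by
  simp only [sig, layerMean_eq_sum_div]

theorem layerMean_eq_sum_dk (ψ : Finset (Fin n) → ℚ) {m : ℕ} (hm : m ≤ n) :
    layerMean ψ m = ∑ j ∈ range (m + 1), (m.choose j : ℚ) * (dk ψ j / n.choose j) := by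
  rw [layerMean, layerSum_eq_sum_dk, sum_div]
  refine sum_congr rfl fun j hj => ?_
  have hjm : j ≤ m := Nat.lt_succ_iff.1 (mem_range.1 hj)
  have hchoose : (n.choose m * m.choose j : ℚ) = n.choose j * (n - j).choose (m - j) := by
    exact_mod_cast Nat.choose_mul hjm
  have hm0 : (n.choose m : ℚ) ≠ 0 := Nat.cast_ne_zero.2 (Nat.choose_pos hm).ne'
  have hj0 : (n.choose j : ℚ) ≠ 0 := Nat.cast_ne_zero.2 (Nat.choose_pos (hjm.trans hm)).ne'
  field_simp
  linear_combination -dk ψ j * hchoose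

theorem layerMean_dualFun (φ : Finset (Fin n) → ℚ) {m : ℕ} (hm : m ≤ n) :
    layerMean (dualFun φ) m = 1 - layerMean φ (n - m) := by
  have hm0 : (n.choose m : ℚ) ≠ 0 := Nat.cast_ne_zero.2 (Nat.choose_pos hm).ne'
  rw [layerMean, layerMean, layerSum_dualFun φ hm, Nat.choose_symm hm, sub_div, div_self hm0]

end LayerSums

theorem signature_from_dual_dk_general
    (n : ℕ)
    (φ : Finset (Fin n) → ℚ) :
    ∀ k : ℕ, 1 ≤ k → k ≤ n →
      sig φ k = ∑ j ∈ Finset.Icc 1 k,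
        (((k - 1).choose (j - 1) : ℚ) / (n.choose j : ℚ)) * dk (dualFun φ) j := by
  intro k hk hkn
  calc sig φ k = layerMean φ (n - (k - 1)) - layerMean φ (n - k) := by
        rw [sig_eq_layerMean_sub, show n - k + 1 = n - (k - 1) by omega]
    _ = layerMean (dualFun φ) k - layerMean (dualFun φ) (k - 1) := by
        rw [layerMean_dualFun φ hkn, layerMean_dualFun φ (by omega)]
        ring
    _ = ∑ j ∈ range (k + 1), (k.choose j : ℚ) * (dk (dualFun φ) j / n.choose j)
          - ∑ j ∈ range k, ((k - 1).choose j : ℚ) * (dk (dualFun φ) j / n.choose j) := by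
        rw [layerMean_eq_sum_dk _ hkn, layerMean_eq_sum_dk _ (by omega), Nat.sub_add_cancel hk]
    _ = ∑ j ∈ Icc 1 k, ((k - 1).choose (j - 1) : ℚ) * (dk (dualFun φ) j / n.choose j) :=
        sum_range_choose_mul_sub_sum_range_choose_mul _ hk
    _ = _ := sum_congr rfl fun j _ => by rw [div_mul_eq_mul_div, mul_div_assoc]

/-- `s_k = ∑_{j=1}^{k} (C(k−1, j−1)/C(n, j)) · dᴰ_j` for `k = 1,…,n`. -/
theorem signature_from_dual_dk
    (n : ℕ) (hn : 1 ≤ n)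
    (φ : Finset (Fin n) → ℚ)
    (h01 : ∀ A, φ A = 0 ∨ φ A = 1)
    (hmono : ∀ A B : Finset (Fin n), A ⊆ B → φ A ≤ φ B)
    (hempty : φ ∅ = 0) (hfull : φ Finset.univ = 1) :
    ∀ k : ℕ, 1 ≤ k → k ≤ n →
      sig φ k = ∑ j ∈ Finset.Icc 1 k,
        (((k - 1).choose (j - 1) : ℚ) / (n.choose j : ℚ)) * dk (dualFun φ) j :=
  signature_from_dual_dk_general n φ
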